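/- Every commutative algebra over ℂ satisfying the Jordan identity ((x·x)·y)·x = (x·x)·(y·x) for all x, y also satisfies the almost-Jordan identity 2·(((y·x)·x)·x) + y·((x·x)·x) = 3·((y·(x·x))·x) for all x, y. (Thus the variety of commutative CD-algebras, i.e. almost-Jordan algebras, contains all Jordan algebras.) -/

import Mathlib

/-!
Linearizing the Jordan identity in `x` (replace `x` by `x ± z`, take the part of degree one in
`z`, and divide by `2`) gives
`2 ((x z) w) x + ((x x) w) z = 2 (x z)(w x) + (x x)(w z)`.
Specializing `z := y`, `w := x` and using the Jordan identity once more to rewrite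
`(x x)(y x)` as `((x x) y) x` yields the almost-Jordan identity.
-/

section Linearization

variable {R V : Type*} [CommRing R] [Invertible (2 : R)] [AddCommGroup V] [Module R V]

theorem jordan_linearized (m : V →ₗ[R] V →ₗ[R] V) (hcomm : ∀ x y : V, m x y = m y x)
    (hJ : ∀ x y : V, m (m (m x x) y) x = m (m x x) (m y x)) (x z w : V) :
    (2 : R) • m (m (m x z) w) x + m (m (m x x) w) z =
      (2 : R) • m (m x z) (m w x) + m (m x x) (m w z) := by
  have hplus := hJ (x + z) w
  have hminus := hJ (x - z) w
  simp only [map_add, map_sub, LinearMap.add_apply, LinearMap.sub_apply, hcomm z x]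
    at hplus hminus
  refine (isUnit_of_invertible (2 : R)).smul_left_cancel.mp ?_
  linear_combination (norm := module) hplus - hminus - (2 : R) • hJ z w

end Linearization

theorem jordan_implies_almost_jordan
    {V : Type*} [AddCommGroup V] [Module ℂ V]
    (m : V →ₗ[ℂ] V →ₗ[ℂ] V) (hcomm : ∀ x y : V, m x y = m y x)
    (hJ : ∀ x y : V, m (m (m x x) y) x = m (m x x) (m y x)) :
    ∀ x y : V,
      (2 : ℂ) • m (m (m y x) x) x + m y (m (m x x) x) =
        (3 : ℂ) • m (m y (m x x)) x := by
  intro x y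
  have hlin := jordan_linearized m hcomm hJ x y x
  rw [hcomm x y, hcomm (m (m x x) x) y, hcomm (m y x) (m x x)] at hlin
  have hJxy := hJ x y
  rw [hcomm (m x x) y] at hJxy
  linear_combination (norm := module) hlin - (3 : ℂ) • hJxy
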